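/- arXiv:1412.8580 — 3 statements merged into one kernel-verified Lean document; each statement's English description precedes it below -/
import Mathlib

section
/- Let α < β be real numbers and let z be a real number with z > β. Then ∫_α^β (1/(π √((x−α)(β−x)))) · dx/(x−z) = −1 / √((z−α)(z−β)). -/
/-!
The Möbius map `φ` sending `α, β, z` to `-1, 1, ∞` satisfies
`φ' / √(1 - φ²) = √((z - α)(z - β)) / ((z - x) √((x - α)(β - x)))`, so the integrand is
`-1 / (π √((z - α)(z - β)))` times the derivative of `arcsin ∘ φ`, which increases by `π` on
`[α, β]`. Since that derivative is nonnegative, its improper integral exists automatically.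
-/

open Real Set intervalIntegral

theorem intervalIntegral.integral_eq_sub_of_hasDerivAt_of_nonneg {g g' : ℝ → ℝ} {a b : ℝ}
    (hab : a ≤ b) (hcont : ContinuousOn g (Icc a b))
    (hderiv : ∀ x ∈ Ioo a b, HasDerivAt g (g' x) x) (hpos : ∀ x ∈ Ioo a b, 0 ≤ g' x) :
    ∫ x in a..b, g' x = g b - g a :=
  integral_eq_sub_of_hasDerivAt_of_le hab hcont hderiv <|
    (intervalIntegrable_iff_integrableOn_Ioc_of_le hab).2 <|
      integrableOn_deriv_of_nonneg hcont hderiv hpos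

/-- The Möbius transformation sending `α`, `β`, `z` to `-1`, `1`, `∞`. -/
noncomputable def mobiusToUnit (α β z x : ℝ) : ℝ :=
  ((2 * z - α - β) * x - z * (α + β) + 2 * α * β) / ((β - α) * (z - x))

section mobiusToUnit

variable {α β z : ℝ}

lemma mobiusToUnit_left (hαβ : α ≠ β) (hαz : α ≠ z) : mobiusToUnit α β z α = -1 := by
  have : (β - α) * (z - α) ≠ 0 := mul_ne_zero (sub_ne_zero.2 hαβ.symm) (sub_ne_zero.2 hαz.symm)
  rw [mobiusToUnit, div_eq_iff this]
  ring

lemma mobiusToUnit_right (hαβ : α ≠ β) (hβz : β ≠ z) : mobiusToUnit α β z β = 1 := by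
  have : (β - α) * (z - β) ≠ 0 := mul_ne_zero (sub_ne_zero.2 hαβ.symm) (sub_ne_zero.2 hβz.symm)
  rw [mobiusToUnit, div_eq_iff this]
  ring

lemma one_sub_mobiusToUnit_sq {x : ℝ} (hαβ : α ≠ β) (hxz : x ≠ z) :
    1 - mobiusToUnit α β z x ^ 2
      = 4 * ((z - α) * (z - β)) * ((x - α) * (β - x)) / ((β - α) * (z - x)) ^ 2 := by
  have h1 : β - α ≠ 0 := sub_ne_zero.2 hαβ.symm
  have h2 : z - x ≠ 0 := sub_ne_zero.2 hxz.symm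
  rw [mobiusToUnit]
  field_simp
  ring

lemma hasDerivAt_mobiusToUnit {x : ℝ} (hαβ : α ≠ β) (hxz : x ≠ z) :
    HasDerivAt (mobiusToUnit α β z) (2 * ((z - α) * (z - β)) / ((β - α) * (z - x) ^ 2)) x := by
  have h1 : β - α ≠ 0 := sub_ne_zero.2 hαβ.symm
  have h2 : z - x ≠ 0 := sub_ne_zero.2 hxz.symm
  have hnum : HasDerivAt (fun y => (2 * z - α - β) * y - z * (α + β) + 2 * α * β)
      ((2 * z - α - β) * 1) x :=
    (((hasDerivAt_id' x).const_mul _).sub_const _).add_const _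
  have hden : HasDerivAt (fun y => (β - α) * (z - y)) ((β - α) * -1) x :=
    ((hasDerivAt_id' x).const_sub z).const_mul (β - α)
  refine (hnum.div hden (mul_ne_zero h1 h2)).congr_deriv ?_
  field_simp
  ring

lemma continuousOn_mobiusToUnit {s : Set ℝ} (hαβ : α ≠ β) (hz : z ∉ s) :
    ContinuousOn (mobiusToUnit α β z) s :=
  ContinuousOn.div (by fun_prop) (by fun_prop) fun x hx =>
    mul_ne_zero (sub_ne_zero.2 hαβ.symm) (sub_ne_zero.2 (ne_of_mem_of_not_mem hx hz).symm)

lemma hasDerivAt_arcsin_mobiusToUnit {x : ℝ} (hx : x ∈ Ioo α β) (hβz : β < z) :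
    HasDerivAt (fun y => arcsin (mobiusToUnit α β z y))
      (√((z - α) * (z - β)) / ((z - x) * √((x - α) * (β - x)))) x := by
  obtain ⟨hαx, hxβ⟩ := hx
  have hxz : x ≠ z := by linarith
  have hP : 0 < (z - α) * (z - β) := by nlinarith
  have hw : 0 < (x - α) * (β - x) := by nlinarith
  have hβα : 0 < β - α := by linarith
  have hzx : 0 < z - x := by linarith
  have hsq : 1 - mobiusToUnit α β z x ^ 2
      = (2 * √((z - α) * (z - β)) * √((x - α) * (β - x)) / ((β - α) * (z - x))) ^ 2 := by
    rw [one_sub_mobiusToUnit_sq (hαx.trans hxβ).ne hxz, div_pow, mul_pow, mul_pow, mul_pow,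
      sq_sqrt hP.le, sq_sqrt hw.le]
    ring
  have hlt : |mobiusToUnit α β z x| < 1 := by
    rw [← sq_lt_one_iff_abs_lt_one]
    have : 0 < 2 * √((z - α) * (z - β)) * √((x - α) * (β - x)) / ((β - α) * (z - x)) := by
      positivity
    nlinarith
  obtain ⟨hlo, hhi⟩ := abs_lt.1 hlt
  refine ((hasDerivAt_arcsin hlo.ne' hhi.ne).comp x
    (hasDerivAt_mobiusToUnit (hαx.trans hxβ).ne hxz)).congr_deriv ?_
  rw [hsq, sqrt_sq (by positivity)]
  field_simp
  rw [sq_sqrt hP.le]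

end mobiusToUnit

/-- `∫_α^β dx/(π √((x−α)(β−x)) (x−z)) = −1/√((z−α)(z−β))` for `z > β`. -/
theorem cauchy_integral_arcsine_weight (α β z : ℝ) (hαβ : α < β) (hz : β < z) :
    ∫ x in α..β, (1 / (π * Real.sqrt ((x - α) * (β - x)))) * (1 / (x - z))
      = -1 / Real.sqrt ((z - α) * (z - β)) := by
  set D := √((z - α) * (z - β))
  have hD : 0 < D := sqrt_pos.2 (by nlinarith)
  have hintegrand : ∀ x, 1 / (π * √((x - α) * (β - x))) * (1 / (x - z))
      = -1 / (π * D) * (D / ((z - x) * √((x - α) * (β - x)))) := by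
    intro x
    rw [show z - x = -(x - z) by ring]
    field_simp
  have hcont : ContinuousOn (fun y => arcsin (mobiusToUnit α β z y)) (Icc α β) :=
    continuous_arcsin.comp_continuousOn <|
      continuousOn_mobiusToUnit hαβ.ne fun h => by linarith [h.2]
  have hderiv_nonneg : ∀ x ∈ Ioo α β, 0 ≤ D / ((z - x) * √((x - α) * (β - x))) := fun x hx =>
    div_nonneg hD.le (mul_nonneg (by linarith [hx.2]) (sqrt_nonneg _))
  rw [integral_congr fun x _ => hintegrand x, intervalIntegral.integral_const_mul,
    integral_eq_sub_of_hasDerivAt_of_nonneg hαβ.le hcont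
      (fun x hx => hasDerivAt_arcsin_mobiusToUnit hx hz) hderiv_nonneg,
    mobiusToUnit_right hαβ.ne hz.ne, mobiusToUnit_left hαβ.ne (hαβ.trans hz).ne, arcsin_one,
    arcsin_neg_one]
  field_simp
  ring
end

section
/- Let α ∈ (−1, ∞) and let z be a real number with z > α. Then −(1/π) ∫_{−1}^{α} (√(x+1)/√(α−x)) · dx/(x−z) = √((z+1)/(z−α)) − 1. -/
/-!
The substitution `t = √((x + 1) / (α - x))` rationalizes the integrand, and with
`k = √((z + 1) / (z - α))` one finds the primitive `2 arctan t - 2k arctan (t / k)`.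
It vanishes at `x = -1` and tends to `π - kπ` as `x → α⁻` (where `t → ∞`), so the improper
fundamental theorem of calculus gives the value of the integral.
-/

open Real Set Filter Topology MeasureTheory Interval intervalIntegral

theorem intervalIntegrable_inv_sqrt_sub {a b : ℝ} (hab : a ≤ b) :
    IntervalIntegrable (fun x => (√(b - x))⁻¹) volume a b := by
  have h := (intervalIntegrable_rpow' (a := b - a) (b := 0) (r := -(1 / 2))
    (by norm_num)).comp_sub_left b
  simp only [sub_sub_cancel, sub_zero] at h
  refine h.congr_uIoo fun x hx => ?_
  rw [uIoo_of_le hab] at hx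
  simp only [Real.rpow_neg (sub_nonneg.2 hx.2.le), Real.sqrt_eq_rpow]

theorem intervalIntegrable_sqrt_div_sqrt_mul_inv_sub {α z : ℝ} (hα : -1 ≤ α) (hz : α < z) :
    IntervalIntegrable (fun x => √(x + 1) / √(α - x) * (1 / (x - z))) volume (-1) α := by
  have hcont : ContinuousOn (fun x => √(x + 1) / (x - z)) [[-1, α]] := by
    refine ContinuousOn.div (by fun_prop) (by fun_prop) fun x hx => ?_
    rw [uIcc_of_le hα] at hx
    linarith [hx.2]
  convert (intervalIntegrable_inv_sqrt_sub hα).mul_continuousOn hcont using 2 with x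
  ring

noncomputable def sqrtRatio (α y : ℝ) : ℝ := √(y + 1) / √(α - y)

noncomputable def sqrtWeightPrimitive (α k y : ℝ) : ℝ :=
  2 * arctan (sqrtRatio α y) - 2 * k * arctan (sqrtRatio α y / k)

theorem sqrtRatio_sq {α x : ℝ} (hx : x ∈ Ioo (-1) α) :
    sqrtRatio α x ^ 2 = (x + 1) / (α - x) := by
  rw [sqrtRatio, div_pow, Real.sq_sqrt (by linarith [hx.1]), Real.sq_sqrt (by linarith [hx.2])]

theorem hasDerivAt_sqrtRatio {α x : ℝ} (hx : x ∈ Ioo (-1) α) :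
    HasDerivAt (sqrtRatio α) ((α + 1) / (2 * √(x + 1) * √(α - x) * (α - x))) x := by
  obtain ⟨hx1, hx2⟩ := hx
  have hpos : 0 < α - x := sub_pos.2 hx2
  have hnum : HasDerivAt (fun y => √(y + 1)) (1 / (2 * √(x + 1))) x := by
    simpa using ((hasDerivAt_id x).add_const 1).sqrt (by simp only [id]; linarith)
  have hden : HasDerivAt (fun y => √(α - y)) (-1 / (2 * √(α - x))) x := by
    simpa using ((hasDerivAt_id x).const_sub α).sqrt hpos.ne'
  refine (hnum.div hden (Real.sqrt_pos.2 hpos).ne').congr_deriv ?_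
  have : 0 < √(x + 1) := Real.sqrt_pos.2 (by linarith)
  have : 0 < √(α - x) := Real.sqrt_pos.2 hpos
  field_simp
  linear_combination
    (α - x) * Real.sq_sqrt (show 0 ≤ x + 1 by linarith) - (x + 1) * Real.sq_sqrt hpos.le

theorem hasDerivAt_sqrtWeightPrimitive {α z k x : ℝ} (hz : α < z) (hk : 0 < k)
    (hk2 : k ^ 2 = (z + 1) / (z - α)) (hx : x ∈ Ioo (-1) α) :
    HasDerivAt (sqrtWeightPrimitive α k) (√(x + 1) / √(α - x) * (1 / (x - z))) x := by
  have hu := hasDerivAt_sqrtRatio hx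
  refine (((hu.arctan).const_mul 2).sub
    (((hu.div_const k).arctan).const_mul (2 * k))).congr_deriv ?_
  have hu2 := sqrtRatio_sq hx
  obtain ⟨hx1, hx2⟩ := hx
  have hzα : z - α ≠ 0 := by linarith
  have hz1 : z + 1 ≠ 0 := by linarith
  have hα1 : α + 1 ≠ 0 := by linarith
  have hxz : x - z ≠ 0 := by linarith
  have hzx : z - x ≠ 0 := by linarith
  have h1 : 1 + sqrtRatio α x ^ 2 = (α + 1) / (α - x) := by
    rw [hu2]; field_simp; ring
  have h2 : 1 + (sqrtRatio α x / k) ^ 2 = (z - x) * (α + 1) / ((α - x) * (z + 1)) := by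
    rw [div_pow, hu2, hk2]; field_simp; ring
  rw [h1, h2]
  have : 0 < √(x + 1) := Real.sqrt_pos.2 (by linarith)
  have : 0 < √(α - x) := Real.sqrt_pos.2 (by linarith)
  field_simp
  linear_combination (x - z) * Real.sq_sqrt (show 0 ≤ x + 1 by linarith)

theorem tendsto_sqrtWeightPrimitive_nhdsGT_neg_one {α : ℝ} (hα : -1 < α) (k : ℝ) :
    Tendsto (sqrtWeightPrimitive α k) (𝓝[>] (-1)) (𝓝 0) := by
  have hcont : ContinuousAt (sqrtWeightPrimitive α k) (-1) := by
    have : ContinuousAt (sqrtRatio α) (-1) :=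
      ContinuousAt.div (by fun_prop) (by fun_prop) (Real.sqrt_pos.2 (by linarith)).ne'
    unfold sqrtWeightPrimitive
    fun_prop
  simpa [sqrtWeightPrimitive, sqrtRatio] using hcont.tendsto.mono_left nhdsWithin_le_nhds

theorem tendsto_sqrtRatio_nhdsLT {α : ℝ} (hα : -1 < α) :
    Tendsto (sqrtRatio α) (𝓝[<] α) atTop := by
  have hden : Tendsto (fun y => √(α - y)) (𝓝[<] α) (𝓝[>] 0) := by
    refine tendsto_nhdsWithin_iff.2 ⟨?_, ?_⟩
    · have : Continuous fun y => √(α - y) := by fun_prop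
      simpa using (this.tendsto α).mono_left nhdsWithin_le_nhds
    · filter_upwards [self_mem_nhdsWithin] with y hy
      exact Real.sqrt_pos.2 (sub_pos.2 hy)
  have hnum : Tendsto (fun y => √(y + 1)) (𝓝[<] α) (𝓝 √(α + 1)) :=
    ((continuous_id.add continuous_const).sqrt.tendsto α).mono_left nhdsWithin_le_nhds
  exact (hnum.pos_mul_atTop (Real.sqrt_pos.2 (by linarith)) hden.inv_tendsto_nhdsGT_zero).congr
    fun y => (div_eq_mul_inv _ _).symm

theorem tendsto_sqrtWeightPrimitive_nhdsLT {α k : ℝ} (hα : -1 < α) (hk : 0 < k) :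
    Tendsto (sqrtWeightPrimitive α k) (𝓝[<] α) (𝓝 (π - k * π)) := by
  have hu := tendsto_sqrtRatio_nhdsLT hα
  have harctan := tendsto_nhds_of_tendsto_nhdsWithin tendsto_arctan_atTop
  rw [show π - k * π = 2 * (π / 2) - 2 * k * (π / 2) by ring]
  exact ((harctan.comp hu).const_mul 2).sub
    ((harctan.comp (hu.atTop_div_const hk)).const_mul (2 * k))

/-- `−(1/π)∫_{−1}^α (√(x+1)/√(α−x)) dx/(x−z) = √((z+1)/(z−α)) − 1` for `z > α > −1`. -/
theorem cauchy_integral_sqrt_weight (α z : ℝ) (hα : -1 < α) (hz : α < z) :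
    -(1 / π) * ∫ x in (-1 : ℝ)..α, (Real.sqrt (x + 1) / Real.sqrt (α - x)) * (1 / (x - z))
      = Real.sqrt ((z + 1) / (z - α)) - 1 := by
  set k := √((z + 1) / (z - α))
  have hratio : 0 < (z + 1) / (z - α) := div_pos (by linarith) (by linarith)
  have hk : 0 < k := Real.sqrt_pos.2 hratio
  rw [integral_eq_sub_of_hasDerivAt_of_tendsto hα
    (fun x hx => hasDerivAt_sqrtWeightPrimitive hz hk (Real.sq_sqrt hratio.le) hx)
    (intervalIntegrable_sqrt_div_sqrt_mul_inv_sub hα.le hz)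
    (tendsto_sqrtWeightPrimitive_nhdsGT_neg_one hα k) (tendsto_sqrtWeightPrimitive_nhdsLT hα hk)]
  field_simp [pi_ne_zero]
  ring
end

section
/- Let b > 0 and define h(x) = 2b (√(1−x²) − x·arccos(x)) / (1−x²)^{3/2} for x ∈ (−1, 1). Then there exist constants C > 0 and δ > 0 such that for all x ∈ (−1, −1+δ), |h(x) − bπ/(√2 (1+x)^{3/2})| ≤ C / √(1+x). -/
/-!
Over the common denominator `√2 (1 - x)^{3/2} (1 + x)^{3/2}` the difference has numerator
`b · g x` with `g x = 2√2 (√(1 - x²) - x arccos x) - π (1 - x)^{3/2}`. Since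
`(√(1 - x²) - x arccos x)' = -arccos x` is bounded, `g` is Lipschitz on `[-1, 1)`, and
`g (-1) = 0`; so the numerator is `O(1 + x)` and the quotient is `O((1 + x)^{-1/2})`.
-/

open Real Set

noncomputable def errNumerator (x : ℝ) : ℝ :=
  2 * √2 * (√(1 - x ^ 2) - x * arccos x) - π * √(1 - x) ^ 3

lemma errNumerator_neg_one : errNumerator (-1) = 0 := by
  have : √2 ^ 3 = 2 * √2 := by rw [pow_succ, sq_sqrt zero_le_two]
  norm_num [errNumerator, this]
  ring

lemma hasDerivAt_sqrt_one_sub_sq_sub_mul_arccos {x : ℝ} (h₁ : -1 < x) (h₂ : x < 1) :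
    HasDerivAt (fun y ↦ √(1 - y ^ 2) - y * arccos y) (-arccos x) x := by
  have hpos : 0 < 1 - x ^ 2 := by nlinarith
  have hsqrt := (((hasDerivAt_id x).pow 2).const_sub 1).sqrt hpos.ne'
  have harccos := (hasDerivAt_id x).mul (hasDerivAt_arccos h₁.ne' h₂.ne)
  refine (hsqrt.sub harccos).congr_deriv ?_
  have : √(1 - x ^ 2) ≠ 0 := (sqrt_pos.2 hpos).ne'
  simp only [id, Pi.pow_apply]
  field_simp
  ring

lemma hasDerivAt_sqrt_one_sub_pow_three {x : ℝ} (h : x < 1) :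
    HasDerivAt (fun y ↦ √(1 - y) ^ 3) (-(3 / 2) * √(1 - x)) x := by
  have hpos : 0 < 1 - x := by linarith
  refine ((((hasDerivAt_id x).const_sub 1).sqrt hpos.ne').pow 3).congr_deriv ?_
  have : √(1 - x) ≠ 0 := (sqrt_pos.2 hpos).ne'
  simp only [id]
  field_simp
  rw [sq_sqrt hpos.le]
  ring

lemma hasDerivAt_errNumerator {x : ℝ} (h₁ : -1 < x) (h₂ : x < 1) :
    HasDerivAt errNumerator (2 * √2 * -arccos x - π * (-(3 / 2) * √(1 - x))) x :=
  ((hasDerivAt_sqrt_one_sub_sq_sub_mul_arccos h₁ h₂).const_mul _).sub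
    ((hasDerivAt_sqrt_one_sub_pow_three h₂).const_mul π)

lemma abs_errNumerator_le {x : ℝ} (h₁ : -1 < x) (h₂ : x < 1) :
    |errNumerator x| ≤ 7 / 2 * √2 * π * (1 + x) := by
  have hcont : ContinuousOn errNumerator (Icc (-1) x) := by
    unfold errNumerator
    fun_prop
  obtain ⟨c, ⟨hc₁, hc₂⟩, hc⟩ := exists_hasDerivAt_eq_slope errNumerator _ h₁ hcont
    fun y hy ↦ hasDerivAt_errNumerator hy.1 (hy.2.trans h₂)
  rw [errNumerator_neg_one, sub_zero, sub_neg_eq_add, add_comm, eq_div_iff (by linarith)] at hc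
  have harccos : arccos c ≤ π := arccos_le_pi c
  have hsqrt : √(1 - c) ≤ √2 := sqrt_le_sqrt (by linarith)
  rw [← hc, abs_mul, abs_of_pos (by linarith : 0 < 1 + x)]
  refine mul_le_mul_of_nonneg_right ?_ (by linarith)
  rw [abs_le]
  constructor <;> nlinarith [arccos_nonneg c, sqrt_nonneg (1 - c), sqrt_nonneg 2, pi_pos]

lemma rpow_three_halves_eq_sqrt_pow {y : ℝ} (hy : 0 ≤ y) : y ^ ((3 : ℝ) / 2) = √y ^ 3 := by
  rw [rpow_div_two_eq_sqrt _ hy, ← rpow_natCast]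
  norm_num

lemma sub_eq_errNumerator_div {x : ℝ} (b : ℝ) (h₁ : -1 < x) (h₂ : x < 1) :
    2 * b * (√(1 - x ^ 2) - x * arccos x) / (1 - x ^ 2) ^ ((3 : ℝ) / 2)
        - b * π / (√2 * (1 + x) ^ ((3 : ℝ) / 2))
      = b * errNumerator x / (√2 * √(1 - x) ^ 3 * √(1 + x) ^ 3) := by
  have hsplit : √(1 - x ^ 2) = √(1 + x) * √(1 - x) := by
    rw [← sqrt_mul (by linarith)]
    ring_nf
  have hu : √(1 + x) ≠ 0 := (sqrt_pos.2 (by linarith)).ne'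
  have hv : √(1 - x) ≠ 0 := (sqrt_pos.2 (by linarith)).ne'
  rw [errNumerator, rpow_three_halves_eq_sqrt_pow (by nlinarith),
    rpow_three_halves_eq_sqrt_pow (by linarith), hsplit]
  field_simp

/-- Near `x = −1`, `h(x) = bπ/(√2 (1+x)^{3/2}) + O((1+x)^{−1/2})`. -/
theorem log_deriv_r_behavior_at_minus_one (b : ℝ) (hb : 0 < b) :
    ∃ C > (0 : ℝ), ∃ δ > (0 : ℝ), ∀ x ∈ Set.Ioo (-1 : ℝ) (-1 + δ),
      |2 * b * (Real.sqrt (1 - x ^ 2) - x * Real.arccos x) / (1 - x ^ 2) ^ ((3 : ℝ) / 2)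
          - b * π / (Real.sqrt 2 * (1 + x) ^ ((3 : ℝ) / 2))|
        ≤ C / Real.sqrt (1 + x) := by
  refine ⟨7 / 2 * π * b, by positivity, 1, one_pos, ?_⟩
  rintro x ⟨hx₁, hx₂⟩
  have hu : 0 < √(1 + x) := sqrt_pos.2 (by linarith)
  have hv : 1 ≤ √(1 - x) := one_le_sqrt.2 (by linarith)
  have hnum := abs_errNumerator_le hx₁ (by linarith)
  rw [← sq_sqrt (by linarith : 0 ≤ 1 + x)] at hnum
  rw [sub_eq_errNumerator_div b hx₁ (by linarith), abs_div, abs_mul, abs_of_pos hb,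
    abs_of_pos (by positivity : 0 < √2 * √(1 - x) ^ 3 * √(1 + x) ^ 3)]
  calc b * |errNumerator x| / (√2 * √(1 - x) ^ 3 * √(1 + x) ^ 3)
      ≤ b * (7 / 2 * √2 * π * √(1 + x) ^ 2) / (√2 * 1 * √(1 + x) ^ 3) := by
        gcongr
        exact one_le_pow₀ hv
    _ = 7 / 2 * π * b / √(1 + x) := by
        field_simp
end
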